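/- arXiv:2412.20463 — 13 statements merged into one kernel-verified Lean document; each statement's English description precedes it below -/
import Mathlib

section
/- If 𝓛 is a maximal chain in the poset ([κ]^{κ|κ}, ⊆) of subsets A of an infinite cardinal κ with |A| = κ and |κ \ A| = κ, then the intersection ⋂𝓛 has cardinality strictly less than κ. -/
open Cardinal Set

/-- A subset `D` of a preorder is weakly dense: every nondegenerate
closed interval meets `D`. -/
def WeaklyDense {L : Type*} [Preorder L] (D : Set L) : Prop :=
  ∀ x y : L, x < y → ∃ z ∈ D, x ≤ z ∧ z ≤ y

/-- The weight of an order: least cardinality of a weakly dense subset. -/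
noncomputable def lweight (L : Type*) [Preorder L] : Cardinal :=
  sInf {c | ∃ D : Set L, WeaklyDense D ∧ #↥D = c}

/-- An order has dense jumps if between any two elements there is a jump. -/
def DenseJumps (L : Type*) [Preorder L] : Prop :=
  ∀ a b : L, a < b → ∃ c d : L, a ≤ c ∧ c < d ∧ d ≤ b ∧ ∀ z : L, ¬(c < z ∧ z < d)

/-- Dedekind completeness: every nonempty bounded-above set has a supremum. -/
def DedekindComplete (L : Type*) [Preorder L] : Prop :=
  ∀ S : Set L, S.Nonempty → BddAbove S → ∃ s : L, IsLUB S s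

/-- Weakly Boolean: Dedekind-complete with dense jumps. -/
def WeaklyBoolean (L : Type*) [Preorder L] : Prop :=
  DedekindComplete L ∧ DenseJumps L

/-- `𝓛` is a maximal chain in the family `F` of subsets of `α`, ordered by inclusion. -/
def MaxChainIn {α : Type*} (F 𝓛 : Set (Set α)) : Prop :=
  𝓛 ⊆ F ∧ IsChain (· ⊆ ·) 𝓛 ∧
    ∀ A ∈ F, A ∉ 𝓛 → ¬ ∀ C ∈ 𝓛, A ⊆ C ∨ C ⊆ A

/-- The set of right endpoints of jumps of an order. -/
def jumpD (L : Type*) [Preorder L] : Set L :=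
  {b : L | ∃ a : L, a < b ∧ ∀ z : L, ¬(a < z ∧ z < b)}

/-- The cofinality of an order: least cardinality of a cofinal subset. -/
noncomputable def cofin (L : Type*) [Preorder L] : Cardinal :=
  sInf {c | ∃ D : Set L, (∀ x : L, ∃ d ∈ D, x ≤ d) ∧ #↥D = c}

/-- The image of a family of sets under a bijection (`f*(τ)` in the paper). -/
def fStar {α : Type*} (f : α ≃ α) (τ : Set (Set α)) : Set (Set α) :=
  (Set.image f) '' τ

/-- The class of all "topologies" (families of sets) homeomorphic to `τ`. -/
def homClass {α : Type*} (τ : Set (Set α)) : Set (Set (Set α)) :=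
  {σ | ∃ f : α ≃ α, σ = fStar f τ}

/-- `τ` is a topology on `α`, viewed as a family of subsets. -/
def IsTopOn {α : Type*} (τ : Set (Set α)) : Prop :=
  ∅ ∈ τ ∧ Set.univ ∈ τ ∧ (∀ 𝒮 ⊆ τ, ⋃₀ 𝒮 ∈ τ) ∧ ∀ U ∈ τ, ∀ V ∈ τ, U ∩ V ∈ τ


lemma split_set_aux {α : Type*} (hα : ℵ₀ ≤ #α) (S : Set α) (hS : #↥S = #α) :
    ∃ A : Set α, A ⊆ S ∧ #↥A = #α ∧ #↥(S \ A) = #α := by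
  have h1 : #(↥S ⊕ ↥S) = #↥S := by
    simp only [Cardinal.mk_sum, Cardinal.lift_id]
    exact Cardinal.add_eq_self (by rw [hS]; exact hα)
  obtain ⟨e⟩ := Cardinal.eq.mp h1.symm
  have hpre : ∀ t : Set (↥S ⊕ ↥S), #↥(e ⁻¹' t) = #↥t := by
    intro t
    rw [show e ⁻¹' t = e.symm '' t from ((e.symm.image_eq_preimage_symm t).symm),
      Cardinal.mk_image_eq e.symm.injective]
  have hinl : #↥(Set.range (Sum.inl : ↥S → ↥S ⊕ ↥S)) = #α := by
    rw [Cardinal.mk_range_eq _ Sum.inl_injective, hS]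
  have hinr : #↥(Set.range (Sum.inr : ↥S → ↥S ⊕ ↥S)) = #α := by
    rw [Cardinal.mk_range_eq _ Sum.inr_injective, hS]
  refine ⟨Subtype.val '' (e ⁻¹' (Set.range Sum.inl)), ?_, ?_, ?_⟩
  · exact (Set.image_subset_range _ _).trans (by rw [Subtype.range_val])
  · rw [Cardinal.mk_image_eq Subtype.val_injective, hpre, hinl]
  · have : S \ Subtype.val '' (e ⁻¹' (Set.range Sum.inl))
        = Subtype.val '' (e ⁻¹' (Set.range Sum.inr)) := by
      ext x
      constructor
      · rintro ⟨hxS, hx⟩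
        rcases hsum : e ⟨x, hxS⟩ with y | y
        · exact absurd ⟨⟨x, hxS⟩, by simp [Set.mem_preimage, hsum], rfl⟩ hx
        · exact ⟨⟨x, hxS⟩, by simp [Set.mem_preimage, hsum], rfl⟩
      · rintro ⟨⟨x, hxS⟩, hx, rfl⟩
        refine ⟨hxS, ?_⟩
        rintro ⟨⟨y, hyS⟩, hy, hyx⟩
        simp only at hyx
        subst hyx
        rcases Set.mem_preimage.mp hx with ⟨a, ha⟩
        rcases Set.mem_preimage.mp hy with ⟨b, hb⟩
        rw [← ha] at hb
        exact absurd hb (by simp)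
    rw [this, Cardinal.mk_image_eq Subtype.val_injective, hpre, hinr]

theorem stmt0 {α : Type*} (hα : ℵ₀ ≤ #α) (𝓛 : Set (Set α))
    (h : MaxChainIn {A : Set α | #↥A = #α ∧ #↥Aᶜ = #α} 𝓛) :
    #↥(⋂₀ 𝓛) < #α := by
  by_contra hlt
  push_neg at hlt
  have hM : #↥(⋂₀ 𝓛) = #α := le_antisymm (Cardinal.mk_set_le _) hlt
  obtain ⟨A, hAM, hA, hMA⟩ := split_set_aux hα _ hM
  have hdiffne : (⋂₀ 𝓛 \ A).Nonempty := by
    rw [← Set.nonempty_coe_sort, ← Cardinal.mk_ne_zero_iff, hMA]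
    exact fun h0 => by rw [h0, le_zero_iff] at hα; exact Cardinal.aleph0_ne_zero hα
  rcases Set.eq_empty_or_nonempty 𝓛 with h0 | ⟨C₀, hC₀⟩
  · subst h0
    have hAc : #↥Aᶜ = #α := by
      rwa [Set.compl_eq_univ_diff, ← Set.sInter_empty]
    have hAmem : A ∈ {A : Set α | #↥A = #α ∧ #↥Aᶜ = #α} := ⟨hA, hAc⟩
    exact h.2.2 A hAmem (Set.notMem_empty A) (fun C hC => absurd hC (Set.notMem_empty C))
  · have hAc : #↥Aᶜ = #α := by
      refine le_antisymm (Cardinal.mk_set_le _) ?_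
      rw [← hMA]
      exact Cardinal.mk_le_mk_of_subset (fun x hx => hx.2)
    have hAnot : A ∉ 𝓛 := by
      intro hA𝓛
      obtain ⟨x, hx⟩ := hdiffne
      exact hx.2 (hx.1 A hA𝓛)
    refine h.2.2 A ⟨hA, hAc⟩ hAnot (fun C hC => Or.inl ?_)
    exact hAM.trans (Set.sInter_subset_of_mem hC)
end

section
/- If 𝓛 is a maximal chain in the poset ([κ]^{κ|κ}, ⊆), then κ \ ⋃𝓛 has cardinality strictly less than κ. -/
open Cardinal Set

lemma split_set {α : Type*} (T : Set α) (hT : ℵ₀ ≤ #↥T) :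
    ∃ S ⊆ T, #↥S = #↥T ∧ #↥(T \ S) = #↥T := by
  have hsum : #(↥T ⊕ ↥T) = #↥T := by
    simp [Cardinal.add_eq_self hT]
  obtain ⟨e⟩ := Cardinal.eq.mp hsum
  set S' : Set ↥T := Set.range (e ∘ Sum.inl) with hS'
  refine ⟨Subtype.val '' S', ?_, ?_, ?_⟩
  · exact (Set.image_subset_range _ _).trans (by simp)
  · rw [Cardinal.mk_image_eq Subtype.val_injective]
    exact Cardinal.mk_range_eq _ (e.injective.comp Sum.inl_injective)
  · have hdiff : T \ Subtype.val '' S' = Subtype.val '' S'ᶜ := by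
      ext x
      simp only [Set.mem_diff, Set.mem_image, Set.mem_compl_iff]
      constructor
      · rintro ⟨hx, hnx⟩
        exact ⟨⟨x, hx⟩, fun hmem => hnx ⟨⟨x, hx⟩, hmem, rfl⟩, rfl⟩
      · rintro ⟨⟨y, hy⟩, hny, rfl⟩
        exact ⟨hy, fun ⟨z, hz, hzz⟩ => hny (by rwa [Subtype.ext hzz.symm] )⟩
    rw [hdiff, Cardinal.mk_image_eq Subtype.val_injective]
    have h2 : S'ᶜ = e '' Set.range Sum.inr := by
      rw [hS', Set.range_comp, ← Equiv.image_compl, Set.compl_range_inl]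
    rw [h2, Cardinal.mk_image_eq e.injective,
      Cardinal.mk_range_eq _ Sum.inr_injective]

theorem stmt1 {α : Type*} (hα : ℵ₀ ≤ #α) (𝓛 : Set (Set α))
    (h : MaxChainIn {A : Set α | #↥A = #α ∧ #↥Aᶜ = #α} 𝓛) :
    #↥((⋃₀ 𝓛)ᶜ) < #α := by
  set T : Set α := (⋃₀ 𝓛)ᶜ with hTdef
  by_contra hlt
  have hTle : #↥T ≤ #α := Cardinal.mk_set_le T
  have hTeq : #↥T = #α := le_antisymm hTle (not_lt.mp hlt)
  obtain ⟨S, hST, hS, hTS⟩ := split_set T (hTeq ▸ hα)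
  set B : Set α := ⋃₀ 𝓛 ∪ S with hBdef
  have hBcompl : Bᶜ = T \ S := by
    rw [hBdef, Set.compl_union, hTdef]
    rfl
  have hSsub : S ⊆ B := Set.subset_union_right
  have hBcard : #↥B = #α := by
    refine le_antisymm (Cardinal.mk_set_le B) ?_
    calc #α = #↥S := (hS.trans hTeq).symm
      _ ≤ #↥B := Cardinal.mk_le_mk_of_subset hSsub
  have hBF : B ∈ {A : Set α | #↥A = #α ∧ #↥Aᶜ = #α} := by
    refine ⟨hBcard, ?_⟩
    rw [hBcompl]
    exact hTS.trans hTeq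
  have hSne : S.Nonempty := by
    rw [← Set.nonempty_coe_sort, ← Cardinal.mk_ne_zero_iff, hS, hTeq]
    exact fun h0 => aleph0_ne_zero (le_antisymm (h0 ▸ hα) zero_le)
  have hBnot : B ∉ 𝓛 := by
    intro hBmem
    obtain ⟨x, hx⟩ := hSne
    have hxT : x ∈ T := hST hx
    exact hxT ⟨B, hBmem, hSsub hx⟩
  exact h.2.2 B hBF hBnot fun C hC => Or.inr ((Set.subset_sUnion_of_mem hC).trans Set.subset_union_left)
end

section
/- Let 𝓛 be a maximal chain in ([κ]^{κ|κ}, ⊆) and let α ∈ ⋃𝓛 \ ⋂𝓛. Define A_α = ⋃{C ∈ 𝓛 : α ∉ C} and B_α = ⋂{C ∈ 𝓛 : α ∈ C}. Then A_α ∈ 𝓛 and B_α ∈ 𝓛. -/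
open Cardinal Set

theorem stmt2 {α : Type*} (hα : ℵ₀ ≤ #α) (𝓛 : Set (Set α))
    (h : MaxChainIn {A : Set α | #↥A = #α ∧ #↥Aᶜ = #α} 𝓛)
    (a : α) (ha : a ∈ ⋃₀ 𝓛 \ ⋂₀ 𝓛) :
    (⋃₀ {C ∈ 𝓛 | a ∉ C}) ∈ 𝓛 ∧ (⋂₀ {C ∈ 𝓛 | a ∈ C}) ∈ 𝓛 := by
  obtain ⟨⟨C₁, hC₁L, haC₁⟩, hna⟩ := ha
  obtain ⟨C₀, hC₀L, haC₀⟩ : ∃ C₀ ∈ 𝓛, a ∉ C₀ := by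
    by_contra hc
    push_neg at hc
    exact hna fun C hC => hc C hC
  obtain ⟨hF, hch, hmax⟩ := h
  -- key comparability: C without a is contained in D with a
  have key : ∀ C ∈ 𝓛, ∀ D ∈ 𝓛, a ∉ C → a ∈ D → C ⊆ D := by
    intro C hC D hD haC haD
    rcases eq_or_ne C D with rfl | hne
    · exact absurd haD haC
    rcases hch hC hD hne with h1 | h1
    · exact h1
    · exact absurd (h1 haD) haC
  set A := ⋃₀ {C ∈ 𝓛 | a ∉ C} with hA
  set B := ⋂₀ {C ∈ 𝓛 | a ∈ C} with hB
  have hC₀A : C₀ ⊆ A := subset_sUnion_of_mem ⟨hC₀L, haC₀⟩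
  have hAC₁ : A ⊆ C₁ := sUnion_subset fun C hC => key C hC.1 C₁ hC₁L hC.2 haC₁
  have hC₀B : C₀ ⊆ B := subset_sInter fun D hD => key C₀ hC₀L D hD.1 haC₀ hD.2
  have hBC₁ : B ⊆ C₁ := sInter_subset_of_mem ⟨hC₁L, haC₁⟩
  have hcard : ∀ X : Set α, C₀ ⊆ X → X ⊆ C₁ → #↥X = #α ∧ #↥Xᶜ = #α := by
    intro X h0 h1
    constructor
    · refine le_antisymm (mk_set_le _) ?_
      calc #α = #↥C₀ := (hF hC₀L).1.symm
        _ ≤ #↥X := mk_le_mk_of_subset h0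
    · refine le_antisymm (mk_set_le _) ?_
      calc #α = #↥C₁ᶜ := (hF hC₁L).2.symm
        _ ≤ #↥Xᶜ := mk_le_mk_of_subset (compl_subset_compl.2 h1)
  have hAcomp : ∀ C ∈ 𝓛, A ⊆ C ∨ C ⊆ A := by
    intro C hC
    by_cases hac : a ∈ C
    · exact Or.inl (sUnion_subset fun D hD => key D hD.1 C hC hD.2 hac)
    · exact Or.inr (subset_sUnion_of_mem ⟨hC, hac⟩)
  have hBcomp : ∀ C ∈ 𝓛, B ⊆ C ∨ C ⊆ B := by
    intro C hC
    by_cases hac : a ∈ C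
    · exact Or.inl (sInter_subset_of_mem ⟨hC, hac⟩)
    · exact Or.inr (subset_sInter fun D hD => key C hC D hD.1 hac hD.2)
  constructor
  · by_contra hAL
    exact hmax A (hcard A hC₀A hAC₁) hAL hAcomp
  · by_contra hBL
    exact hmax B (hcard B hC₀B hBC₁) hBL hBcomp
end

section
/- Let 𝓛 be a maximal chain in ([κ]^{κ|κ}, ⊆) and α ∈ ⋃𝓛 \ ⋂𝓛. With A_α = ⋃{C ∈ 𝓛 : α ∉ C} and B_α = ⋂{C ∈ 𝓛 : α ∈ C}, we have B_α = A_α ∪ {α}. -/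
open Cardinal Set

theorem stmt3 {α : Type*} (hα : ℵ₀ ≤ #α) (𝓛 : Set (Set α))
    (h : MaxChainIn {A : Set α | #↥A = #α ∧ #↥Aᶜ = #α} 𝓛)
    (a : α) (ha : a ∈ ⋃₀ 𝓛 \ ⋂₀ 𝓛) :
    (⋂₀ {C ∈ 𝓛 | a ∈ C}) = (⋃₀ {C ∈ 𝓛 | a ∉ C}) ∪ {a} := by
  obtain ⟨⟨C₁, hC₁L, haC₁⟩, hnInter⟩ := ha
  simp only [Set.mem_sInter, not_forall] at hnInter
  obtain ⟨C₀, hC₀L, haC₀⟩ := hnInter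
  -- key: any C without a is contained in any D with a
  have key : ∀ C ∈ 𝓛, a ∉ C → ∀ D ∈ 𝓛, a ∈ D → C ⊆ D := by
    intro C hC haC D hD haD
    rcases eq_or_ne C D with rfl | hne
    · exact subset_rfl
    rcases h.2.1 hC hD hne with h1 | h1
    · exact h1
    · exact absurd (h1 haD) haC
  set M : Set α := (⋃₀ {C ∈ 𝓛 | a ∉ C}) ∪ {a} with hMdef
  have hMsub : ∀ D ∈ 𝓛, a ∈ D → M ⊆ D := by
    intro D hD haD x hx
    rcases hx with hx | hx
    · obtain ⟨C, ⟨hC, haC⟩, hxC⟩ := hx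
      exact key C hC haC D hD haD hxC
    · rcases hx with rfl; exact haD
  have hsubM : ∀ C ∈ 𝓛, a ∉ C → C ⊆ M := by
    intro C hC haC x hx
    exact Or.inl ⟨C, ⟨hC, haC⟩, hx⟩
  have hMF : M ∈ {A : Set α | #↥A = #α ∧ #↥Aᶜ = #α} := by
    have hC₀F := h.1 hC₀L
    have hC₁F := h.1 hC₁L
    constructor
    · refine le_antisymm ?_ ?_
      · simpa using Cardinal.mk_le_mk_of_subset (Set.subset_univ M)
      · calc #α = #↥C₀ := hC₀F.1.symm
          _ ≤ #↥M := Cardinal.mk_le_mk_of_subset (hsubM C₀ hC₀L haC₀)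
    · refine le_antisymm ?_ ?_
      · simpa using Cardinal.mk_le_mk_of_subset (Set.subset_univ Mᶜ)
      · calc #α = #↥C₁ᶜ := hC₁F.2.symm
          _ ≤ #↥Mᶜ := Cardinal.mk_le_mk_of_subset
            (Set.compl_subset_compl.mpr (hMsub C₁ hC₁L haC₁))
  have hMcomp : ∀ C ∈ 𝓛, M ⊆ C ∨ C ⊆ M := by
    intro C hC
    by_cases haC : a ∈ C
    · exact Or.inl (hMsub C hC haC)
    · exact Or.inr (hsubM C hC haC)
  have hML : M ∈ 𝓛 := by
    by_contra hML
    exact h.2.2 M hMF hML hMcomp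
  apply le_antisymm
  · exact Set.sInter_subset_of_mem ⟨hML, Or.inr rfl⟩
  · intro x hx
    intro D hD
    exact hMsub D hD.1 hD.2 hx
end

section
/- Let 𝓛 be a maximal chain in ([κ]^{κ|κ}, ⊆). For α, β ∈ ⋃𝓛 \ ⋂𝓛 with α ≠ β, defining A_γ = ⋃{C ∈ 𝓛 : γ ∉ C} and B_γ = ⋂{C ∈ 𝓛 : γ ∈ C}, we have A_α ≠ A_β and B_α ≠ B_β. -/
open Cardinal Set

theorem stmt4 {α : Type*} (hα : ℵ₀ ≤ #α) (𝓛 : Set (Set α))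
    (h : MaxChainIn {A : Set α | #↥A = #α ∧ #↥Aᶜ = #α} 𝓛)
    (a b : α) (ha : a ∈ ⋃₀ 𝓛 \ ⋂₀ 𝓛) (hb : b ∈ ⋃₀ 𝓛 \ ⋂₀ 𝓛) (hab : a ≠ b) :
    (⋃₀ {C ∈ 𝓛 | a ∉ C}) ≠ (⋃₀ {C ∈ 𝓛 | b ∉ C}) ∧
    (⋂₀ {C ∈ 𝓛 | a ∈ C}) ≠ (⋂₀ {C ∈ 𝓛 | b ∈ C}) := by
  obtain ⟨h𝓛F, hchain, hmax⟩ := h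
  -- helper: if some C ∈ 𝓛 contains x but not y, both conclusions hold for (x, y)
  have aux : ∀ (x y : α) (C : Set α), C ∈ 𝓛 → x ∈ C → y ∉ C →
      (⋃₀ {C ∈ 𝓛 | x ∉ C}) ≠ (⋃₀ {C ∈ 𝓛 | y ∉ C}) ∧
      (⋂₀ {C ∈ 𝓛 | x ∈ C}) ≠ (⋂₀ {C ∈ 𝓛 | y ∈ C}) := by
    intro x y C hC hxC hyC
    constructor
    · intro heq
      have hxA : x ∉ ⋃₀ {C ∈ 𝓛 | x ∉ C} := by
        rintro ⟨C', ⟨_, hxC'⟩, hx'⟩; exact hxC' hx'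
      have hxB : x ∈ ⋃₀ {C ∈ 𝓛 | y ∉ C} := ⟨C, ⟨hC, hyC⟩, hxC⟩
      rw [← heq] at hxB; exact hxA hxB
    · intro heq
      have hyB : y ∈ ⋂₀ {C ∈ 𝓛 | y ∈ C} := fun C' hC' => hC'.2
      have hsub : ⋂₀ {C ∈ 𝓛 | x ∈ C} ⊆ C := Set.sInter_subset_of_mem ⟨hC, hxC⟩
      rw [heq] at hsub
      exact hyC (hsub hyB)
  -- key: some member of 𝓛 separates a and b
  have key : ∃ C ∈ 𝓛, ¬ (a ∈ C ↔ b ∈ C) := by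
    by_contra hcon
    push_neg at hcon
    obtain ⟨⟨C₁, hC₁𝓛, haC₁⟩, ha2⟩ := ha
    rw [Set.mem_sInter] at ha2
    push_neg at ha2
    obtain ⟨C₀, hC₀𝓛, haC₀⟩ := ha2
    set D := ⋃₀ {C ∈ 𝓛 | a ∉ C} with hD
    set A' := insert a D with hA'
    have hDsub : ∀ C ∈ 𝓛, a ∈ C → D ⊆ C := by
      intro C hC haC x hx
      obtain ⟨C', ⟨hC'𝓛, haC'⟩, hxC'⟩ := hx
      rcases hchain.total hC'𝓛 hC with h1 | h1
      · exact h1 hxC'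
      · exact absurd (h1 haC) haC'
    have hcomp : ∀ C ∈ 𝓛, A' ⊆ C ∨ C ⊆ A' := by
      intro C hC
      by_cases haC : a ∈ C
      · exact Or.inl (Set.insert_subset haC (hDsub C hC haC))
      · exact Or.inr (fun x hx => Set.mem_insert_iff.mpr (Or.inr ⟨C, ⟨hC, haC⟩, hx⟩))
    have hC₀sub : C₀ ⊆ A' :=
      fun x hx => Set.mem_insert_iff.mpr (Or.inr ⟨C₀, ⟨hC₀𝓛, haC₀⟩, hx⟩)
    have hA'C₁ : A' ⊆ C₁ := Set.insert_subset haC₁ (hDsub C₁ hC₁𝓛 haC₁)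
    have hcard1 : #↥A' = #α := le_antisymm (Cardinal.mk_set_le _)
      ((h𝓛F hC₀𝓛).1 ▸ Cardinal.mk_le_mk_of_subset hC₀sub)
    have hcard2 : #↥(A'ᶜ) = #α := le_antisymm (Cardinal.mk_set_le _)
      ((h𝓛F hC₁𝓛).2 ▸ Cardinal.mk_le_mk_of_subset (Set.compl_subset_compl.mpr hA'C₁))
    have hbA' : b ∉ A' := by
      intro hbA'
      rcases Set.mem_insert_iff.mp hbA' with h1 | h1
      · exact hab h1.symm
      · obtain ⟨C', ⟨hC'𝓛, haC'⟩, hbC'⟩ := h1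
        exact haC' ((hcon C' hC'𝓛).mpr hbC')
    have hA'𝓛 : A' ∉ 𝓛 := fun hmem => hbA' ((hcon A' hmem).mp (Set.mem_insert a D))
    exact hmax A' ⟨hcard1, hcard2⟩ hA'𝓛 hcomp
  obtain ⟨C, hC𝓛, hCne⟩ := key
  by_cases haC : a ∈ C
  · have hbC : b ∉ C := fun hb' => hCne ⟨fun _ => hb', fun _ => haC⟩
    exact aux a b C hC𝓛 haC hbC
  · have hbC : b ∈ C := by
      by_contra hb'
      exact hCne ⟨fun h' => absurd h' haC, fun h' => absurd h' hb'⟩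
    obtain ⟨h1, h2⟩ := aux b a C hC𝓛 hbC haC
    exact ⟨h1.symm, h2.symm⟩
end

section
/- If 𝓛 is a maximal chain in ([κ]^{κ|κ}, ⊆), then for each A ∈ 𝓛 the weight of the initial segment (-∞, A]_𝓛 = {C ∈ 𝓛 : C ⊆ A} (the minimal cardinality of a weakly dense subset) equals κ. -/
open Cardinal Set

private def cset {α : Type*} (𝓛 : Set (Set α)) (A : Set α) (a : α) : Set α :=
  ⋃₀ {C | C ∈ 𝓛 ∧ C ⊆ A ∧ a ∉ C}

private def dset {α : Type*} (𝓛 : Set (Set α)) (A : Set α) (a : α) : Set α :=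
  ⋂₀ {C | C ∈ 𝓛 ∧ C ⊆ A ∧ a ∈ C}

theorem stmt5 {α : Type*} (hα : ℵ₀ ≤ #α) (𝓛 : Set (Set α))
    (h : MaxChainIn {A : Set α | #↥A = #α ∧ #↥Aᶜ = #α} 𝓛)
    (A : Set α) (hA : A ∈ 𝓛) :
    lweight ↥{C ∈ 𝓛 | C ⊆ A} = #α := by
  classical
  obtain ⟨hsub, hchain, hmax⟩ := h
  have comp : ∀ X ∈ 𝓛, ∀ Y ∈ 𝓛, X ⊆ Y ∨ Y ⊆ X := by
    intro X hX Y hY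
    rcases eq_or_ne X Y with rfl | hne
    · exact Or.inl le_rfl
    · exact hchain hX hY hne
  have memF : ∀ X ∈ 𝓛, #↥X = #α ∧ #↥Xᶜ = #α := fun X hX => hsub hX
  have hAcard := memF A hA
  have mem_of_comp : ∀ B : Set α, #↥B = #α → #↥Bᶜ = #α →
      (∀ C ∈ 𝓛, B ⊆ C ∨ C ⊆ B) → B ∈ 𝓛 := by
    intro B h1 h2 hcomp
    by_contra hB
    exact hmax B ⟨h1, h2⟩ hB hcomp
  set I : Set α := ⋂₀ 𝓛 with hIdef
  -- basic facts
  have hCne : ∀ a ∈ A \ I, ∃ C, C ∈ 𝓛 ∧ C ⊆ A ∧ a ∉ C := by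
    intro a ha
    have : ¬ ∀ C ∈ 𝓛, a ∈ C := by
      intro hall; exact ha.2 (by rw [hIdef]; exact fun C hC => hall C hC)
    push_neg at this
    obtain ⟨C, hC, haC⟩ := this
    refine ⟨C, hC, ?_, haC⟩
    rcases comp C hC A hA with h1 | h2
    · exact h1
    · exact absurd (h2 ha.1) haC
  have hcA : ∀ a : α, cset 𝓛 A a ⊆ A := by
    intro a
    exact sUnion_subset fun C hC => hC.2.1
  have hac : ∀ a : α, a ∉ cset 𝓛 A a := by
    intro a ⟨C, hC, haC⟩
    exact hC.2.2 haC
  have had : ∀ a : α, a ∈ dset 𝓛 A a := by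
    intro a
    exact mem_sInter.mpr fun C hC => hC.2.2
  have hdA : ∀ a ∈ A, dset 𝓛 A a ⊆ A := by
    intro a ha
    exact sInter_subset_of_mem ⟨hA, le_rfl, ha⟩
  have hcd : ∀ a : α, cset 𝓛 A a ⊆ dset 𝓛 A a := by
    intro a x hx
    obtain ⟨C, hC, hxC⟩ := hx
    refine mem_sInter.mpr fun D hD => ?_
    rcases comp C hC.1 D hD.1 with h1 | h2
    · exact h1 hxC
    · exact absurd (h2 hD.2.2) hC.2.2
  have hccard : ∀ a ∈ A \ I, #↥(cset 𝓛 A a) = #α ∧ #↥(cset 𝓛 A a)ᶜ = #α := by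
    intro a ha
    obtain ⟨C, hC⟩ := hCne a ha
    constructor
    · refine le_antisymm (mk_set_le _) ?_
      calc #α = #↥C := (memF C hC.1).1.symm
        _ ≤ _ := mk_le_mk_of_subset (subset_sUnion_of_mem hC)
    · exact le_antisymm (mk_set_le _)
        (hAcard.2 ▸ mk_le_mk_of_subset (compl_subset_compl.mpr (hcA a)))
  have hdcard : ∀ a ∈ A \ I, #↥(dset 𝓛 A a) = #α ∧ #↥(dset 𝓛 A a)ᶜ = #α := by
    intro a ha
    constructor
    · refine le_antisymm (mk_set_le _) ?_
      calc #α = #↥(cset 𝓛 A a) := (hccard a ha).1.symm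
        _ ≤ _ := mk_le_mk_of_subset (hcd a)
    · exact le_antisymm (mk_set_le _)
        (hAcard.2 ▸ mk_le_mk_of_subset (compl_subset_compl.mpr (hdA a ha.1)))
  have hcmem : ∀ a ∈ A \ I, cset 𝓛 A a ∈ 𝓛 := by
    intro a ha
    refine mem_of_comp _ (hccard a ha).1 (hccard a ha).2 ?_
    intro X hX
    by_cases hx : ∀ C, (C ∈ 𝓛 ∧ C ⊆ A ∧ a ∉ C) → C ⊆ X
    · exact Or.inl (sUnion_subset hx)
    · push_neg at hx
      obtain ⟨C, hC, hCX⟩ := hx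
      rcases comp C hC.1 X hX with h1 | h2
      · exact absurd h1 hCX
      · exact Or.inr (h2.trans (subset_sUnion_of_mem hC))
  have hdmem : ∀ a ∈ A \ I, dset 𝓛 A a ∈ 𝓛 := by
    intro a ha
    refine mem_of_comp _ (hdcard a ha).1 (hdcard a ha).2 ?_
    intro X hX
    by_cases hx : ∃ C, (C ∈ 𝓛 ∧ C ⊆ A ∧ a ∈ C) ∧ C ⊆ X
    · obtain ⟨C, hC, hCX⟩ := hx
      exact Or.inl ((sInter_subset_of_mem hC).trans hCX)
    · push_neg at hx
      refine Or.inr (subset_sInter fun C hC => ?_)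
      rcases comp C hC.1 X hX with h1 | h2
      · exact absurd h1 (hx C hC)
      · exact h2
  have hsingle : ∀ a ∈ A \ I, dset 𝓛 A a \ cset 𝓛 A a = {a} := by
    intro a ha
    apply Subset.antisymm
    · intro b hb
      by_contra hba
      have hbne : b ≠ a := hba
      set E : Set α := insert a (cset 𝓛 A a) with hE
      have hEA : E ⊆ A := insert_subset ha.1 (hcA a)
      have hEcard : #↥E = #α := by
        refine le_antisymm (mk_set_le _) ?_
        calc #α = #↥(cset 𝓛 A a) := (hccard a ha).1.symm
          _ ≤ _ := mk_le_mk_of_subset (subset_insert _ _)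
      have hEc : #↥Eᶜ = #α := le_antisymm (mk_set_le _)
        (hAcard.2 ▸ mk_le_mk_of_subset (compl_subset_compl.mpr hEA))
      have hEcompat : ∀ C ∈ 𝓛, E ⊆ C ∨ C ⊆ E := by
        intro C hC
        by_cases haC : a ∈ C
        · rcases comp C hC A hA with hCA | hAC
          · left
            have hdC : dset 𝓛 A a ⊆ C := sInter_subset_of_mem ⟨hC, hCA, haC⟩
            exact (insert_subset (had a) (hcd a)).trans hdC
          · left; exact hEA.trans hAC
        · rcases comp C hC A hA with hCA | hAC
          · right
            have h1 : C ⊆ cset 𝓛 A a := subset_sUnion_of_mem ⟨hC, hCA, haC⟩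
            exact h1.trans (subset_insert _ _)
          · exact absurd (hAC ha.1) haC
      have hEmem : E ∈ 𝓛 := mem_of_comp E hEcard hEc hEcompat
      have hdE : dset 𝓛 A a ⊆ E := sInter_subset_of_mem ⟨hEmem, hEA, mem_insert _ _⟩
      rcases hdE hb.1 with h1 | h2
      · exact hbne h1
      · exact hb.2 h2
    · intro b hb
      have hba : b = a := hb
      subst hba
      exact ⟨had b, hac b⟩
  have hcinj : ∀ a ∈ A \ I, ∀ b ∈ A \ I, cset 𝓛 A a = cset 𝓛 A b → a = b := by
    intro a ha b hb hcc
    rcases comp _ (hdmem a ha) _ (hdmem b hb) with h1 | h2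
    · have : a ∈ dset 𝓛 A b \ cset 𝓛 A b := ⟨h1 (had a), by rw [← hcc]; exact hac a⟩
      rw [hsingle b hb] at this
      exact this
    · have : b ∈ dset 𝓛 A a \ cset 𝓛 A a := ⟨h2 (had b), by rw [hcc]; exact hac b⟩
      rw [hsingle a ha] at this
      exact this.symm
  have hdinj : ∀ a ∈ A \ I, ∀ b ∈ A \ I, dset 𝓛 A a = dset 𝓛 A b → a = b := by
    intro a ha b hb hdd
    rcases comp _ (hcmem a ha) _ (hcmem b hb) with h1 | h2
    · have : b ∈ dset 𝓛 A a \ cset 𝓛 A a := ⟨by rw [hdd]; exact had b, fun hbc => hac b (h1 hbc)⟩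
      rw [hsingle a ha] at this
      exact this.symm
    · have : a ∈ dset 𝓛 A b \ cset 𝓛 A b := ⟨by rw [← hdd]; exact had a, fun hbc => hac a (h2 hbc)⟩
      rw [hsingle b hb] at this
      exact this
  -- cardinality of I and A \ I
  have hInotbig : #↥I ≠ #α := by
    intro hcard
    have hIsub : I ⊆ A := sInter_subset_of_mem hA
    have hImem : I ∈ 𝓛 := by
      apply mem_of_comp I hcard
      · exact le_antisymm (mk_set_le _)
          (hAcard.2 ▸ mk_le_mk_of_subset (compl_subset_compl.mpr hIsub))
      · intro C hC; exact Or.inl (sInter_subset_of_mem hC)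
    have hIne : I.Nonempty := by
      rw [← nonempty_coe_sort, ← mk_ne_zero_iff, hcard]
      exact fun h0 => (aleph0_pos.trans_le hα).ne' (h0 ▸ rfl)
    obtain ⟨i0, hi0⟩ := hIne
    have hJadd : #↥(I \ {i0}) + 1 = #α := by
      have := mk_diff_add_mk (singleton_subset_iff.mpr hi0)
      rwa [mk_singleton, hcard] at this
    have hJinf : ℵ₀ ≤ #↥(I \ {i0}) := by
      by_contra hlt
      push_neg at hlt
      have : #↥(I \ {i0}) + 1 < ℵ₀ := add_lt_aleph0 hlt one_lt_aleph0
      rw [hJadd] at this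
      exact absurd hα this.not_ge
    have hJcard : #↥(I \ {i0}) = #α := by
      rw [← hJadd, add_eq_left hJinf (one_le_aleph0.trans hJinf)]
    have hJc : #↥(I \ {i0})ᶜ = #α := le_antisymm (mk_set_le _)
      (hAcard.2 ▸ mk_le_mk_of_subset
        (compl_subset_compl.mpr ((diff_subset).trans hIsub)))
    have hJmem : (I \ {i0}) ∈ 𝓛 := mem_of_comp _ hJcard hJc
      (fun C hC => Or.inl ((diff_subset).trans (sInter_subset_of_mem hC)))
    exact (sInter_subset_of_mem hJmem hi0).2 rfl
  have hIlt : #↥I < #α := lt_of_le_of_ne (mk_set_le _) hInotbig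
  have hAI : #α ≤ #↥(A \ I) := by
    by_contra hlt
    push_neg at hlt
    have hsub2 : A ⊆ (A \ I) ∪ I := fun x hx => by
      by_cases hxI : x ∈ I
      · exact Or.inr hxI
      · exact Or.inl ⟨hx, hxI⟩
    have h1 : #α ≤ #↥((A \ I) ∪ I) := by
      calc #α = #↥A := hAcard.1.symm
        _ ≤ _ := mk_le_mk_of_subset hsub2
    have h2 := h1.trans (mk_union_le _ _)
    exact absurd h2 (add_lt_of_lt hα hlt hIlt).not_ge
  -- the jump property
  have hjump : ∀ a ∈ A \ I, ∀ z : Set α, z ∈ 𝓛 → cset 𝓛 A a ⊆ z → z ⊆ dset 𝓛 A a →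
      z = cset 𝓛 A a ∨ z = dset 𝓛 A a := by
    intro a ha z hz h1 h2
    by_cases haz : a ∈ z
    · right
      exact Subset.antisymm h2 (sInter_subset_of_mem ⟨hz, h2.trans (hdA a ha.1), haz⟩)
    · left
      have h3 : z ⊆ cset 𝓛 A a := subset_sUnion_of_mem ⟨hz, h2.trans (hdA a ha.1), haz⟩
      exact Subset.antisymm h3 h1
  -- the linear order L
  set LS : Set (Set α) := {C ∈ 𝓛 | C ⊆ A} with hLSdef
  have hmemLS : ∀ a ∈ A \ I, cset 𝓛 A a ∈ LS := fun a ha => ⟨hcmem a ha, hcA a⟩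
  have hmemLSd : ∀ a ∈ A \ I, dset 𝓛 A a ∈ LS := fun a ha => ⟨hdmem a ha, hdA a ha.1⟩
  -- lower bound for weight
  have hlow : ∀ D : Set ↥LS, WeaklyDense D → #α ≤ #↥D := by
    intro D hD
    by_contra hltD
    push_neg at hltD
    have key : ∀ p : ↥(A \ I), ∃ z : ↥LS, z ∈ D ∧
        ((z : Set α) = cset 𝓛 A (p : α) ∨ (z : Set α) = dset 𝓛 A (p : α)) := by
      rintro ⟨a, ha⟩
      have hxy : (⟨cset 𝓛 A a, hmemLS a ha⟩ : ↥LS) < ⟨dset 𝓛 A a, hmemLSd a ha⟩ := by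
        rw [Subtype.mk_lt_mk]
        exact lt_of_le_of_ne (hcd a) (fun he => hac a (he ▸ had a))
      obtain ⟨z, hzD, hz1, hz2⟩ := hD _ _ hxy
      have h1 : cset 𝓛 A a ⊆ (z : Set α) := hz1
      have h2 : (z : Set α) ⊆ dset 𝓛 A a := hz2
      exact ⟨z, hzD, (hjump a ha z z.2.1 h1 h2).imp id id⟩
    choose zf hzD hzor using key
    classical
    set g : ↥(A \ I) → ↥D ⊕ ↥D := fun p =>
      if (zf p : Set α) = cset 𝓛 A (p : α) then Sum.inl ⟨zf p, hzD p⟩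
      else Sum.inr ⟨zf p, hzD p⟩ with hgdef
    have ginj : Function.Injective g := by
      intro p q hpq
      by_cases hcp : (zf p : Set α) = cset 𝓛 A (p : α) <;>
        by_cases hcq : (zf q : Set α) = cset 𝓛 A (q : α) <;>
        simp only [hgdef, if_pos, if_neg, hcp, hcq, if_true, if_false] at hpq
      · have hz : zf p = zf q := congrArg Subtype.val (Sum.inl.inj hpq)
        have : cset 𝓛 A (p : α) = cset 𝓛 A (q : α) := by
          rw [← hcp, ← hcq, hz]
        exact Subtype.ext (hcinj _ p.2 _ q.2 this)
      · simp at hpq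
      · simp at hpq
      · have hdp : (zf p : Set α) = dset 𝓛 A (p : α) := (hzor p).resolve_left hcp
        have hdq : (zf q : Set α) = dset 𝓛 A (q : α) := (hzor q).resolve_left hcq
        have hz : zf p = zf q := congrArg Subtype.val (Sum.inr.inj hpq)
        have : dset 𝓛 A (p : α) = dset 𝓛 A (q : α) := by
          rw [← hdp, ← hdq, hz]
        exact Subtype.ext (hdinj _ p.2 _ q.2 this)
    have hle1 : #↥(A \ I) ≤ #(↥D ⊕ ↥D) := mk_le_of_injective ginj
    have hsum : #(↥D ⊕ ↥D) = #↥D + #↥D := by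
      rw [mk_sum, lift_id]
    have : #↥(A \ I) < #α := by
      rw [hsum] at hle1
      exact hle1.trans_lt (add_lt_of_lt hα hltD hltD)
    exact absurd hAI this.not_ge
  -- upper bound: a weakly dense set of size ≤ #α
  let f : ↥(A \ I) → ↥LS := fun p => ⟨cset 𝓛 A (p : α), hmemLS _ p.2⟩
  have hwd : WeaklyDense (range f) := by
    intro x y hxy
    have hle : (x : Set α) ⊆ (y : Set α) := hxy.le
    have hns : ¬ (y : Set α) ⊆ (x : Set α) := fun hyx => hxy.not_ge hyx
    obtain ⟨a, hay, hax⟩ := not_subset.mp hns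
    have haAI : a ∈ A \ I := ⟨y.2.2 hay, fun haI => hax (sInter_subset_of_mem x.2.1 haI)⟩
    refine ⟨f ⟨a, haAI⟩, mem_range_self _, ?_, ?_⟩
    · show (x : Set α) ⊆ cset 𝓛 A a
      exact subset_sUnion_of_mem ⟨x.2.1, x.2.2, hax⟩
    · show cset 𝓛 A a ⊆ (y : Set α)
      refine sUnion_subset fun C hC => ?_
      rcases comp C hC.1 (y : Set α) y.2.1 with h1 | h2
      · exact h1
      · exact absurd (h2 hay) hC.2.2
  have hwcard : #↥(range f) = #α :=
    le_antisymm (mk_range_le.trans (mk_set_le _)) (hlow _ hwd)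
  have hmemS : #α ∈ {c | ∃ D : Set ↥LS, WeaklyDense D ∧ #↥D = c} :=
    ⟨range f, hwd, hwcard⟩
  refine le_antisymm (csInf_le' hmemS) (le_csInf ⟨_, hmemS⟩ ?_)
  rintro c ⟨D, hDw, rfl⟩
  exact hlow D hDw
end

section
/- Every maximal chain 𝓛 in ([κ]^{κ|κ}, ⊆) is a weakly Boolean linear order, i.e., it is Dedekind-complete and has dense jumps. -/
open Cardinal Set

theorem stmt6 {α : Type*} (hα : ℵ₀ ≤ #α) (𝓛 : Set (Set α))
    (h : MaxChainIn {A : Set α | #↥A = #α ∧ #↥Aᶜ = #α} 𝓛) :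
    WeaklyBoolean ↥𝓛 := by
  obtain ⟨hsub, hchain, hmax⟩ := h
  -- comparability within the chain
  have hcomp : ∀ C ∈ 𝓛, ∀ E ∈ 𝓛, C ⊆ E ∨ E ⊆ C := by
    intro C hC E hE
    rcases eq_or_ne C E with rfl | hne
    · exact Or.inl subset_rfl
    · exact hchain hC hE hne
  -- membership from maximality
  have hmem : ∀ A : Set α, #↥A = #α → #↥Aᶜ = #α →
      (∀ C ∈ 𝓛, A ⊆ C ∨ C ⊆ A) → A ∈ 𝓛 := by
    intro A h1 h2 hc
    by_contra hn
    exact hmax A ⟨h1, h2⟩ hn hc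
  -- key: bounded unions of nonempty subfamilies stay in the chain
  have key : ∀ S : Set (Set α), S ⊆ 𝓛 → S.Nonempty → ∀ B ∈ 𝓛,
      (∀ E ∈ S, E ⊆ B) → ⋃₀ S ∈ 𝓛 ∧ ⋃₀ S ⊆ B := by
    intro S hSsub ⟨A0, hA0⟩ B hB hbd
    have hUB : ⋃₀ S ⊆ B := sUnion_subset hbd
    have hcard1 : #↥(⋃₀ S) = #α := by
      refine le_antisymm (Cardinal.mk_set_le _) ?_
      calc #α = #↥A0 := ((hsub (hSsub hA0)).1).symm
        _ ≤ #↥(⋃₀ S) := Cardinal.mk_le_mk_of_subset (subset_sUnion_of_mem hA0)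
    have hcard2 : #↥(⋃₀ S)ᶜ = #α := by
      refine le_antisymm (Cardinal.mk_set_le _) ?_
      calc #α = #↥Bᶜ := ((hsub hB).2).symm
        _ ≤ #↥(⋃₀ S)ᶜ := Cardinal.mk_le_mk_of_subset (compl_subset_compl.2 hUB)
    refine ⟨hmem _ hcard1 hcard2 ?_, hUB⟩
    intro C hC
    by_cases hex : ∃ E ∈ S, C ⊆ E
    · obtain ⟨E, hE, hCE⟩ := hex
      exact Or.inr (hCE.trans (subset_sUnion_of_mem hE))
    · refine Or.inl (sUnion_subset ?_)
      intro E hE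
      rcases hcomp C hC E (hSsub hE) with hh | hh
      · exact absurd ⟨E, hE, hh⟩ hex
      · exact hh
  constructor
  · -- Dedekind completeness
    intro S hne hbdd
    obtain ⟨B, hB⟩ := hbdd
    set S' : Set (Set α) := (fun x : ↥𝓛 => (x : Set α)) '' S with hS'
    have hS'sub : S' ⊆ 𝓛 := by rintro E ⟨x, hx, rfl⟩; exact x.2
    have hS'ne : S'.Nonempty := hne.image _
    have hbd : ∀ E ∈ S', E ⊆ (B : Set α) := by
      rintro E ⟨x, hx, rfl⟩; exact hB hx
    obtain ⟨hU, -⟩ := key S' hS'sub hS'ne (B : Set α) B.2 hbd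
    refine ⟨⟨⋃₀ S', hU⟩, ?_, ?_⟩
    · intro x hx
      exact subset_sUnion_of_mem ⟨x, hx, rfl⟩
    · intro c hc
      refine sUnion_subset ?_
      rintro E ⟨x, hx, rfl⟩
      exact hc hx
  · -- dense jumps
    intro a b hab
    have hab' : (a : Set α) ⊂ (b : Set α) := hab
    obtain ⟨x, hxb, hxa⟩ := exists_of_ssubset hab'
    set S : Set (Set α) := {E | E ∈ 𝓛 ∧ x ∉ E} with hS
    have hSsub : S ⊆ 𝓛 := fun E hE => hE.1
    have haS : (a : Set α) ∈ S := ⟨a.2, hxa⟩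
    have hbd : ∀ E ∈ S, E ⊆ (b : Set α) := by
      intro E hE
      rcases hcomp E hE.1 (b : Set α) b.2 with hh | hh
      · exact hh
      · exact absurd (hh hxb) hE.2
    obtain ⟨hU, hUb⟩ := key S hSsub ⟨_, haS⟩ (b : Set α) b.2 hbd
    set U : Set α := ⋃₀ S with hUdef
    have hxU : x ∉ U := by
      rintro ⟨E, hE, hxE⟩
      exact hE.2 hxE
    set D : Set α := insert x U with hDdef
    -- D is in the chain
    have hDcard1 : #↥D = #α := by
      refine le_antisymm (Cardinal.mk_set_le _) ?_
      calc #α = #↥U := ((hsub hU).1).symm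
        _ ≤ #↥D := Cardinal.mk_le_mk_of_subset (subset_insert _ _)
    have hDcard2 : #↥Dᶜ = #α := by
      have hcompl : Dᶜ = Uᶜ \ {x} := by
        ext y
        simp [hDdef, mem_diff, and_comm, or_iff_not_imp_left]
      have hxmem : ({x} : Set α) ⊆ Uᶜ := singleton_subset_iff.2 hxU
      have hdiff : #↥(Uᶜ \ {x}) + #↥({x} : Set α) = #↥Uᶜ :=
        Cardinal.mk_diff_add_mk hxmem
      rw [Cardinal.mk_singleton, (hsub hU).2] at hdiff
      have hinf : ℵ₀ ≤ #↥(Uᶜ \ {x}) := by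
        by_contra hlt
        push_neg at hlt
        have : #↥(Uᶜ \ {x}) + 1 < ℵ₀ := Cardinal.add_lt_aleph0 hlt Cardinal.one_lt_aleph0
        rw [hdiff] at this
        exact absurd hα (not_le.2 this)
      rw [hcompl]
      calc #↥(Uᶜ \ {x}) = #↥(Uᶜ \ {x}) + 1 := (Cardinal.add_one_eq hinf).symm
        _ = #α := hdiff
    have hUD : U ⊆ D := subset_insert _ _
    have hD : D ∈ 𝓛 := by
      refine hmem _ hDcard1 hDcard2 ?_
      intro C hC
      rcases hcomp C hC U hU with hh | hh
      · exact Or.inr (hh.trans hUD)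
      · by_cases hxC : x ∈ C
        · exact Or.inl (insert_subset hxC hh)
        · exact Or.inr ((subset_sUnion_of_mem (⟨hC, hxC⟩ : C ∈ S)).trans hUD)
    refine ⟨⟨U, hU⟩, ⟨D, hD⟩, ?_, ?_, ?_, ?_⟩
    · exact subset_sUnion_of_mem haS
    · exact Set.ssubset_insert hxU
    · exact insert_subset hxb hUb
    · rintro z ⟨h1, h2⟩
      have h1' : U ⊂ (z : Set α) := h1
      have h2' : (z : Set α) ⊂ D := h2
      have hxz : x ∈ (z : Set α) := by
        by_contra hxz
        refine h1'.2 ?_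
        intro y hy
        rcases h2'.1 hy with rfl | hyU
        · exact absurd hy hxz
        · exact hyU
      exact h2'.2 (insert_subset hxz h1'.1)
end

section
/- Let L be a linear order with dense jumps and weight κ (the least cardinality of a weakly dense subset of L equals κ, an infinite cardinal). Then the set D = {b ∈ L : ∃ a < b with (a,b)_L = ∅} of right endpoints of jumps has cardinality exactly κ. -/
open Cardinal Set

theorem stmt8 {L : Type u} [LinearOrder L] (κ : Cardinal.{u}) (hκ : ℵ₀ ≤ κ)
    (h : DenseJumps L) (hw : lweight L = κ) :
    #↥(jumpD L) = κ := by
  classical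
  unfold lweight at hw
  have hne : {c : Cardinal.{u} | ∃ D : Set L, WeaklyDense D ∧ #↥D = c}.Nonempty :=
    ⟨#L, Set.univ, fun x y hxy => ⟨x, trivial, le_refl x, le_of_lt hxy⟩, Cardinal.mk_univ⟩
  have hmem : ∃ D : Set L, WeaklyDense D ∧ #↥D = κ := hw ▸ csInf_mem hne
  obtain ⟨D, hD, hDk⟩ := hmem
  have hge : κ ≤ #↥(jumpD L) := by
    rw [← hw]
    apply csInf_le (OrderBot.bddBelow _)
    refine ⟨jumpD L, ?_, rfl⟩
    intro x y hxy
    obtain ⟨c, d, hxc, hcd, hdy, hcdempty⟩ := h x y hxy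
    exact ⟨d, ⟨c, hcd, hcdempty⟩, le_trans hxc (le_of_lt hcd), hdy⟩
  have hchoice : ∀ b : ↥(jumpD L), ∃ z : ↥D,
      (z.1 = b.1) ∨ (z.1 < b.1 ∧ ∀ w : L, ¬(z.1 < w ∧ w < b.1)) := by
    rintro ⟨b, a, hab, hempty⟩
    obtain ⟨z, hzD, haz, hzb⟩ := hD a b hab
    rcases eq_or_lt_of_le hzb with rfl | hzb'
    · exact ⟨⟨z, hzD⟩, Or.inl rfl⟩
    · have hnlt : ¬ a < z := fun h' => hempty z ⟨h', hzb'⟩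
      have hza : z = a := le_antisymm (not_lt.mp hnlt) haz
      subst hza
      exact ⟨⟨z, hzD⟩, Or.inr ⟨hab, hempty⟩⟩
  choose f hf using hchoice
  have hle : #↥(jumpD L) ≤ κ := by
    have hinj : Function.Injective
        (fun b : ↥(jumpD L) => if (f b).1 = b.1 then Sum.inl (f b) else Sum.inr (f b) :
          ↥(jumpD L) → ↥D ⊕ ↥D) := by
      intro b b' heq
      simp only at heq
      by_cases h1 : (f b).1 = b.1 <;> by_cases h2 : (f b').1 = b'.1 <;>
        simp [h1, h2] at heq
      · apply Subtype.ext
        rw [← h1, ← h2, heq]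
      · have hb : (f b).1 < b.1 ∧ ∀ w : L, ¬((f b).1 < w ∧ w < b.1) :=
          (hf b).resolve_left h1
        have hb' : (f b').1 < b'.1 ∧ ∀ w : L, ¬((f b').1 < w ∧ w < b'.1) :=
          (hf b').resolve_left h2
        apply Subtype.ext
        rcases lt_trichotomy b.1 b'.1 with hlt | heq' | hgt
        · exact absurd ⟨heq ▸ hb.1, hlt⟩ (hb'.2 b.1)
        · exact heq'
        · exact absurd ⟨heq ▸ hb'.1, hgt⟩ (hb.2 b'.1)
    calc #↥(jumpD L) ≤ #(↥D ⊕ ↥D) := Cardinal.mk_le_of_injective hinj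
      _ = κ + κ := by simp [hDk]
      _ = κ := Cardinal.add_eq_self hκ
  exact le_antisymm hle hge
end

section
/- Let L be a linear order with dense jumps and let G be a weakly dense subset of L. Then the cardinality of the set Jump(L) = {(a,b) ∈ L² : a < b and (a,b)_L = ∅} is at most |G| + ℵ₀. -/
open Cardinal Set

theorem stmt9 {L : Type*} [LinearOrder L] (G : Set L) (hG : WeaklyDense G) :
    #↥{p : L × L | p.1 < p.2 ∧ ∀ z : L, ¬(p.1 < z ∧ z < p.2)} ≤ #↥G + ℵ₀ := by
  classical
  set J : Set (L × L) := {p | p.1 < p.2 ∧ ∀ z : L, ¬(p.1 < z ∧ z < p.2)} with hJ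
  have uniqR : ∀ a b d : L, a < b → a < d → (∀ z, ¬(a < z ∧ z < b)) →
      (∀ z, ¬(a < z ∧ z < d)) → b = d := by
    intro a b d hab had h1 h2
    rcases lt_trichotomy b d with h|h|h
    · exact absurd ⟨hab, h⟩ (h2 b)
    · exact h
    · exact absurd ⟨had, h⟩ (h1 d)
  have uniqL : ∀ a c b : L, a < b → c < b → (∀ z, ¬(a < z ∧ z < b)) →
      (∀ z, ¬(c < z ∧ z < b)) → a = c := by
    intro a c b hab hcb h1 h2
    rcases lt_trichotomy a c with h|h|h
    · exact absurd ⟨h, hcb⟩ (h1 c)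
    · exact h
    · exact absurd ⟨h, hab⟩ (h2 a)
  have hsub : J ⊆ {p ∈ J | p.1 ∈ G} ∪ {p ∈ J | p.2 ∈ G} := by
    rintro ⟨a,b⟩ hp
    obtain ⟨hab, hemp⟩ := hp
    obtain ⟨g, hg, hga, hgb⟩ := hG a b hab
    rcases eq_or_lt_of_le hga with h|h
    · exact Or.inl ⟨⟨hab, hemp⟩, h ▸ hg⟩
    · rcases eq_or_lt_of_le hgb with h'|h'
      · exact Or.inr ⟨⟨hab, hemp⟩, h' ▸ hg⟩
      · exact absurd ⟨h, h'⟩ (hemp g)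
  have h1 : #↥{p ∈ J | p.1 ∈ G} ≤ #↥G := by
    apply Cardinal.mk_le_of_injective (f := fun p : {p ∈ J | p.1 ∈ G} =>
      (⟨(p : L × L).1, p.2.2⟩ : G))
    rintro ⟨⟨a,b⟩, ⟨hab, hemp⟩, haG⟩ ⟨⟨c,d⟩, ⟨hcd, hemp'⟩, hcG⟩ heq
    simp only [Subtype.mk.injEq] at heq
    subst heq
    have := uniqR a b d hab hcd hemp hemp'
    subst this
    rfl
  have h2 : #↥{p ∈ J | p.2 ∈ G} ≤ #↥G := by
    apply Cardinal.mk_le_of_injective (f := fun p : {p ∈ J | p.2 ∈ G} =>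
      (⟨(p : L × L).2, p.2.2⟩ : G))
    rintro ⟨⟨a,b⟩, ⟨hab, hemp⟩, hbG⟩ ⟨⟨c,d⟩, ⟨hcd, hemp'⟩, hdG⟩ heq
    simp only [Subtype.mk.injEq] at heq
    subst heq
    have := uniqL a c b hab hcd hemp hemp'
    subst this
    rfl
  have hGG : #↥G + #↥G ≤ #↥G + ℵ₀ := by
    rcases le_total (#↥G) ℵ₀ with h|h
    · calc #↥G + #↥G ≤ ℵ₀ + ℵ₀ := add_le_add h h
        _ = ℵ₀ := by simp
        _ ≤ #↥G + ℵ₀ := self_le_add_left _ _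
    · calc #↥G + #↥G = #↥G := Cardinal.add_eq_self h
        _ ≤ #↥G + ℵ₀ := self_le_add_right _ _
  calc #↥J ≤ #↥({p ∈ J | p.1 ∈ G} ∪ {p ∈ J | p.2 ∈ G}) := Cardinal.mk_le_mk_of_subset hsub
    _ ≤ #↥{p ∈ J | p.1 ∈ G} + #↥{p ∈ J | p.2 ∈ G} := Cardinal.mk_union_le _ _
    _ ≤ #↥G + #↥G := add_le_add h1 h2
    _ ≤ #↥G + ℵ₀ := hGG
end

section
/- Let L be a weakly Boolean linear order (Dedekind-complete with dense jumps) and let D be the set of right endpoints of jumps of L. Then the map f : L → P(D) given by f(a) = D ∩ (-∞, a]_L is strictly increasing; in particular, the family 𝓛 = {D ∩ (-∞,a]_L : a ∈ L}, ordered by strict inclusion, is a linear order isomorphic to L. -/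
open Cardinal Set

theorem stmt10 {L : Type*} [LinearOrder L] (h : WeaklyBoolean L) :
    StrictMono (fun a : L => jumpD L ∩ Set.Iic a) ∧
    Nonempty (L ≃o ↥{S : Set L | ∃ a : L, S = jumpD L ∩ Set.Iic a}) := by
  have hsm : StrictMono (fun a : L => jumpD L ∩ Set.Iic a) := by
    intro a b hab
    constructor
    · exact Set.inter_subset_inter_right _ (Set.Iic_subset_Iic.2 hab.le)
    · intro hle
      obtain ⟨c, d, hac, hcd, hdb, hjump⟩ := h.2 a b hab
      have hd : d ∈ jumpD L ∩ Set.Iic b := ⟨⟨c, hcd, hjump⟩, hdb⟩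
      have := hle hd
      exact absurd (this.2) (not_le.2 (lt_of_le_of_lt hac hcd))
  refine ⟨hsm, ?_⟩
  have hsm' : StrictMono (fun a : L =>
      (⟨jumpD L ∩ Set.Iic a, a, rfl⟩ : ↥{S : Set L | ∃ a : L, S = jumpD L ∩ Set.Iic a})) := by
    intro a b hab
    exact hsm hab
  have hsurj : Function.Surjective (fun a : L =>
      (⟨jumpD L ∩ Set.Iic a, a, rfl⟩ : ↥{S : Set L | ∃ a : L, S = jumpD L ∩ Set.Iic a})) := by
    rintro ⟨S, a, rfl⟩
    exact ⟨a, rfl⟩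
  exact ⟨StrictMono.orderIsoOfSurjective _ hsm' hsurj⟩
end

section
/- Let L be a weakly Boolean linear order, D its set of right endpoints of jumps, and 𝓛 = {D ∩ (-∞,a]_L : a ∈ L}. Then 𝓛 is a maximal chain of subsets of D in the sense that no set A ⊆ D with ∅ ⊊ A ⊊ D and A ∉ 𝓛 is comparable (under inclusion) with every member of 𝓛. -/
open Cardinal Set

theorem stmt11 {L : Type*} [LinearOrder L] (h : WeaklyBoolean L) :
    ∀ A : Set L, A ⊆ jumpD L → A.Nonempty → A ≠ jumpD L →
      A ∉ {S : Set L | ∃ a : L, S = jumpD L ∩ Set.Iic a} →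
      ¬ ∀ a : L, A ⊆ jumpD L ∩ Set.Iic a ∨ jumpD L ∩ Set.Iic a ⊆ A := by
  intro A hAD hAne hAneD hAnot hcomp
  by_cases hbdd : ∃ a, A ⊆ jumpD L ∩ Set.Iic a
  · obtain ⟨a, ha⟩ := hbdd
    have hA_ub : BddAbove A := ⟨a, fun x hx => (ha hx).2⟩
    obtain ⟨s, hs⟩ := h.1 A hAne hA_ub
    apply hAnot
    refine ⟨s, subset_antisymm (fun x hx => ⟨hAD hx, hs.1 hx⟩) ?_⟩
    rintro d ⟨hdD, hds⟩
    by_contra hdA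
    rcases hcomp d with h1 | h2
    · have hsd : s ≤ d := hs.2 (fun x hx => (h1 hx).2)
      have hsd' : s = d := le_antisymm hsd hds
      subst hsd'
      obtain ⟨c, hc, hjump⟩ := hdD
      have hcub : c ∈ upperBounds A := by
        intro x hx
        have hxs : x ≤ s := hs.1 hx
        rcases lt_or_eq_of_le hxs with hlt | heq
        · by_contra hcx
          exact hjump x ⟨lt_of_not_ge hcx, hlt⟩
        · exact absurd (heq ▸ hx) hdA
      exact absurd (hs.2 hcub) (not_le.mpr hc)
    · exact hdA (h2 ⟨hdD, le_refl d⟩)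
  · push_neg at hbdd
    apply hAneD
    refine subset_antisymm hAD fun d hd => ?_
    rcases hcomp d with h1 | h2
    · exact absurd h1 (hbdd d)
    · exact h2 ⟨hd, le_refl d⟩
end

section
/- If κ > λ ≥ ω and 𝓛 is a maximal chain in ([κ]^λ, ⊆) (subsets of κ of size λ), then the cofinality of the linear order (𝓛, ⊆) equals λ⁺ and |⋃𝓛| = λ⁺, while |⋂𝓛| < λ. -/
open Cardinal Set

universe u

lemma exists_cofinal_small {α : Type u} (l : Cardinal.{u}) (hl : ℵ₀ ≤ l)
    (𝓛 : Set (Set α)) (hchain : IsChain (· ⊆ ·) 𝓛)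
    (hcard : ∀ C ∈ 𝓛, #↥C = l) (hne : 𝓛.Nonempty) :
    ∃ D : Set ↥𝓛, (∀ x : ↥𝓛, ∃ d ∈ D, x ≤ d) ∧ #↥D ≤ Order.succ l := by
  classical
  obtain ⟨C₀, hC₀⟩ := hne
  set e : ↥𝓛 := ⟨C₀, hC₀⟩ with he
  set o₀ : Ordinal.{u} := (Order.succ l).ord with ho₀
  have hlim : Order.IsSuccLimit o₀ := Cardinal.isSuccLimit_ord (hl.trans (Order.le_succ l))
  set g : Ordinal.{u} → ↥𝓛 := Ordinal.lt_wf.fix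
    (fun i rec => if h : ∃ b : ↥𝓛, ∀ j, ∀ hj : j < i, rec j hj < b then h.choose else e)
    with hgdef
  have hg0 : ∀ i, g i =
      if h : ∃ b : ↥𝓛, ∀ j, ∀ _ : j < i, g j < b then h.choose else e := by
    intro i
    rw [hgdef]
    exact WellFounded.fix_eq _ _ i
  refine ⟨Set.range (fun t : o₀.ToType => g (((Ordinal.ToType.mk (o := o₀)).symm t : Set.Iio o₀) : Ordinal)),
    ?_, ?_⟩
  · intro x
    by_contra hx
    push_neg at hx
    have hB1 : ∀ i, i < o₀ → ¬ x ≤ g i := by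
      intro i hi hle
      refine hx (g i) ⟨Ordinal.ToType.mk (o := o₀) ⟨i, hi⟩, ?_⟩ hle
      simp only [OrderIso.symm_apply_apply]
    have hB : ∀ i, i < o₀ → g i < x := by
      intro i hi
      have hne' : g i ≠ x := by
        rintro rfl
        exact hB1 i hi le_rfl
      rcases hchain.total (g i).2 x.2 with hle | hle
      · exact lt_of_le_of_ne (Subtype.coe_le_coe.mp hle) hne'
      · exact absurd (Subtype.coe_le_coe.mp hle) (hB1 i hi)
    have hstrict : ∀ i, i < o₀ → ∀ j, j < i → g j < g i := by
      intro i hi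
      have hex : ∃ b : ↥𝓛, ∀ j, ∀ _ : j < i, g j < b :=
        ⟨x, fun j hj => hB j (hj.trans hi)⟩
      rw [hg0 i, dif_pos hex]
      exact hex.choose_spec
    -- for each i < o₀, pick a point in g (succ i) \ g i
    have hchoice : ∀ i : Set.Iio o₀,
        ∃ a, a ∈ (g (Order.succ (i : Ordinal)) : Set α) ∧ a ∉ (g (i : Ordinal) : Set α) := by
      rintro ⟨i, hi⟩
      have h1 : g i < g (Order.succ i) :=
        hstrict (Order.succ i) (hlim.succ_lt hi) i (Order.lt_succ i)
      have h2 : (g i : Set α) ⊂ (g (Order.succ i) : Set α) := Subtype.coe_lt_coe.mpr h1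
      obtain ⟨a, ha1, ha2⟩ := Set.exists_of_ssubset h2
      exact ⟨a, ha1, ha2⟩
    have hsub : ∀ i, i < o₀ → (g i : Set α) ⊆ (x : Set α) := fun i hi => (hB i hi).le
    set F : Set.Iio o₀ → ↥(x : Set α) := fun i =>
      ⟨(hchoice i).choose,
        hsub _ (hlim.succ_lt i.2) (hchoice i).choose_spec.1⟩ with hF
    have hmono : ∀ i j : Set.Iio o₀, (i : Ordinal) < j →
        ((hchoice i).choose ∈ (g (j : Ordinal) : Set α)) := by
      rintro ⟨i, hi⟩ ⟨j, hj⟩ hij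
      have hsle : Order.succ i ≤ j := Order.succ_le_of_lt hij
      rcases eq_or_lt_of_le hsle with heq | hlt
      · subst heq; exact (hchoice ⟨i, hi⟩).choose_spec.1
      · exact (hstrict j hj _ hlt).le (hchoice ⟨i, hi⟩).choose_spec.1
    have hFinj : Function.Injective F := by
      rintro i j hij
      have heq : (hchoice i).choose = (hchoice j).choose := congrArg Subtype.val hij
      rcases lt_trichotomy (i : Ordinal) (j : Ordinal) with hlt | heqo | hlt
      · exact absurd (heq ▸ hmono i j hlt) (hchoice j).choose_spec.2
      · exact Subtype.ext heqo
      · exact absurd (heq ▸ hmono j i hlt) (hchoice i).choose_spec.2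
    have hle : Cardinal.lift.{u} #(Set.Iio o₀) ≤ Cardinal.lift.{u+1} #↥(x : Set α) :=
      Cardinal.lift_mk_le'.mpr ⟨⟨F, hFinj⟩⟩
    rw [Ordinal.mk_Iio_ordinal, hcard _ x.2, Cardinal.lift_lift, ho₀, Cardinal.card_ord,
      Cardinal.lift_le] at hle
    exact absurd hle (not_le.mpr (Order.lt_succ l))
  · calc #↥(Set.range _) ≤ #o₀.ToType := Cardinal.mk_range_le
      _ = o₀.card := Cardinal.mk_toType o₀
      _ = Order.succ l := by rw [ho₀, Cardinal.card_ord]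

theorem stmt16 {α : Type u} (l : Cardinal.{u}) (hl : ℵ₀ ≤ l) (hlκ : l < #α)
    (𝓛 : Set (Set α)) (h : MaxChainIn {A : Set α | #↥A = l} 𝓛) :
    cofin ↥𝓛 = Order.succ l ∧ #↥(⋃₀ 𝓛) = Order.succ l ∧ #↥(⋂₀ 𝓛) < l := by
  classical
  obtain ⟨hsub, hchain, hmax⟩ := h
  have hcard : ∀ C ∈ 𝓛, #↥C = l := fun C hC => hsub hC
  have hmem : ∀ A : Set α, #↥A = l → (∀ C ∈ 𝓛, A ⊆ C ∨ C ⊆ A) → A ∈ 𝓛 := by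
    intro A hA hcomp
    by_contra hA'
    exact hmax A hA hA' hcomp
  have hne : 𝓛.Nonempty := by
    by_contra hn
    rw [Set.not_nonempty_iff_eq_empty] at hn
    subst hn
    obtain ⟨A, hA⟩ := Cardinal.le_mk_iff_exists_set.mp hlκ.le
    exact hmax A hA (Set.notMem_empty A) fun C hC => (Set.notMem_empty C hC).elim
  have hnomax : ∀ M ∈ 𝓛, ∃ C ∈ 𝓛, ¬ C ⊆ M := by
    intro M hM
    by_contra hmaxM
    push_neg at hmaxM
    have hMl : #↥M = l := hcard M hM
    have hMne : M ≠ Set.univ := by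
      rintro rfl
      rw [Cardinal.mk_univ] at hMl
      exact absurd hMl.symm hlκ.ne
    obtain ⟨x, hx⟩ := (Set.ne_univ_iff_exists_notMem M).mp hMne
    have hins : #↥(insert x M : Set α) = l := by
      rw [Cardinal.mk_insert hx, hMl, Cardinal.add_one_eq hl]
    have hinsmem : insert x M ∈ 𝓛 :=
      hmem _ hins fun C hC => Or.inr ((hmaxM C hC).trans (Set.subset_insert x M))
    exact hx (hmaxM _ hinsmem (Set.mem_insert x M))
  obtain ⟨D, hDcof, hDcard⟩ := exists_cofinal_small l hl 𝓛 hchain hcard hne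
  have hDne : Nonempty ↥D := by
    obtain ⟨C₀, hC₀⟩ := hne
    obtain ⟨d, hd, _⟩ := hDcof ⟨C₀, hC₀⟩
    exact ⟨⟨d, hd⟩⟩
  have hsucc_inf : ℵ₀ ≤ Order.succ l := hl.trans (Order.le_succ l)
  have hUcompat : ∀ C ∈ 𝓛, C ⊆ ⋃₀ 𝓛 := fun C hC => Set.subset_sUnion_of_mem hC
  -- generic bound on unions over cofinal families
  have hUnion : ∀ E : Set ↥𝓛, (∀ x : ↥𝓛, ∃ d ∈ E, x ≤ d) →
      (⋃₀ 𝓛 = ⋃ d : E, ((d : ↥𝓛) : Set α)) := by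
    intro E hEcof
    apply Set.Subset.antisymm
    · rintro a ⟨C, hC, haC⟩
      obtain ⟨d, hd, hled⟩ := hEcof ⟨C, hC⟩
      exact Set.mem_iUnion.mpr ⟨⟨d, hd⟩, hled haC⟩
    · rintro a ha
      obtain ⟨⟨d, hd⟩, had⟩ := Set.mem_iUnion.mp ha
      exact ⟨(d : Set α), d.2, had⟩
  have hUnionCard : ∀ E : Set ↥𝓛, Nonempty ↥E →
      #↥(⋃ d : E, ((d : ↥𝓛) : Set α)) ≤ #↥E * l := by
    intro E hEne
    refine (Cardinal.mk_iUnion_le _).trans ?_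
    refine mul_le_mul' le_rfl (ciSup_le' fun d => ?_)
    exact (hcard _ (d : ↥𝓛).2).le
  -- if the whole union has size l, contradiction
  have hUnotl : #↥(⋃₀ 𝓛) ≠ l := by
    intro hUl
    have hUmem : ⋃₀ 𝓛 ∈ 𝓛 := hmem _ hUl fun C hC => Or.inr (hUcompat C hC)
    obtain ⟨C, hC, hCn⟩ := hnomax _ hUmem
    exact hCn (hUcompat C hC)
  have hUge : l ≤ #↥(⋃₀ 𝓛) := by
    obtain ⟨C₀, hC₀⟩ := hne
    calc l = #↥C₀ := (hcard _ hC₀).symm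
      _ ≤ #↥(⋃₀ 𝓛) := Cardinal.mk_le_mk_of_subset (hUcompat _ hC₀)
  have hUgesucc : Order.succ l ≤ #↥(⋃₀ 𝓛) :=
    Order.succ_le_of_lt (hUge.lt_of_ne (Ne.symm hUnotl))
  have hUle : #↥(⋃₀ 𝓛) ≤ Order.succ l := by
    rw [hUnion D hDcof]
    refine (hUnionCard D hDne).trans ?_
    calc #↥D * l ≤ Order.succ l * l := mul_le_mul' hDcard le_rfl
      _ = Order.succ l := by
          rw [Cardinal.mul_eq_max hsucc_inf hl, max_eq_left (Order.le_succ l)]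
  have hU : #↥(⋃₀ 𝓛) = Order.succ l := le_antisymm hUle hUgesucc
  -- cofinality
  have cofin_le : cofin ↥𝓛 ≤ Order.succ l :=
    le_trans (csInf_le (OrderBot.bddBelow _) ⟨D, hDcof, rfl⟩) hDcard
  have cofin_ge : Order.succ l ≤ cofin ↥𝓛 := by
    refine le_csInf ⟨#↥D, D, hDcof, rfl⟩ ?_
    rintro c ⟨E, hEcof, rfl⟩
    rw [Order.succ_le_iff]
    by_contra hc
    push_neg at hc
    have hEne : Nonempty ↥E := by
      obtain ⟨C₀, hC₀⟩ := hne
      obtain ⟨d, hd, _⟩ := hEcof ⟨C₀, hC₀⟩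
      exact ⟨⟨d, hd⟩⟩
    have hSle : #↥(⋃₀ 𝓛) ≤ l := by
      rw [hUnion E hEcof]
      refine (hUnionCard E hEne).trans ?_
      calc #↥E * l ≤ l * l := mul_le_mul' hc le_rfl
        _ = l := Cardinal.mul_eq_self hl
    exact hUnotl (le_antisymm hSle hUge)
  refine ⟨le_antisymm cofin_le cofin_ge, hU, ?_⟩
  -- intersection
  obtain ⟨C₀, hC₀⟩ := hne
  have hIsub : ∀ C ∈ 𝓛, ⋂₀ 𝓛 ⊆ C := fun C hC => Set.sInter_subset_of_mem hC
  have hIle : #↥(⋂₀ 𝓛) ≤ l :=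
    (hcard _ hC₀) ▸ Cardinal.mk_le_mk_of_subset (hIsub _ hC₀)
  refine hIle.lt_of_ne ?_
  intro hIl
  have hImem : ⋂₀ 𝓛 ∈ 𝓛 := hmem _ hIl fun C hC => Or.inl (hIsub C hC)
  have hInonempty : (⋂₀ 𝓛).Nonempty := by
    rw [Set.nonempty_iff_ne_empty]
    intro he
    rw [he, Cardinal.mk_emptyCollection] at hIl
    exact Cardinal.aleph0_pos.not_ge (hl.trans_eq hIl.symm)
  obtain ⟨x, hx⟩ := hInonempty
  have hxn : x ∉ (⋂₀ 𝓛) \ {x} := fun h => h.2 rfl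
  have hIeq : insert x ((⋂₀ 𝓛) \ {x}) = ⋂₀ 𝓛 := by
    rw [Set.insert_diff_singleton, Set.insert_eq_self.mpr hx]
  have hI'card : #↥((⋂₀ 𝓛) \ {x}) = l := by
    have h1 : #↥((⋂₀ 𝓛) \ {x}) + 1 = l := by
      rw [← hIl, ← hIeq, Cardinal.mk_insert hxn, hIeq]
    rcases lt_or_ge (#↥((⋂₀ 𝓛) \ {x})) ℵ₀ with hfin | hinf'
    · exfalso
      have : l < ℵ₀ := h1 ▸ Cardinal.add_lt_aleph0 hfin Cardinal.one_lt_aleph0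
      exact absurd hl (not_le.mpr this)
    · rw [← h1, Cardinal.add_one_eq hinf']
  have hI'mem : (⋂₀ 𝓛) \ {x} ∈ 𝓛 :=
    hmem _ hI'card fun C hC => Or.inl (Set.diff_subset.trans (hIsub C hC))
  exact hxn (hIsub _ hI'mem hx)
end

section
/- Let κ, λ, μ be infinite cardinals with κ = λ + μ, let S ⊆ κ with |S| = λ and |κ \ S| = μ, and let τ = P(S) ∪ {κ}. Then τ is a topology on κ, and the set [τ]_≅ of all topologies on κ homeomorphic to τ, ordered by inclusion, is order-isomorphic to ([κ]^{λ|μ}, ⊆) via the map sending f*(τ) = {f[O] : O ∈ τ} to f[S] for f a bijection of κ. -/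
open Cardinal Set

namespace Stmt18Aux

variable {α : Type*}

def tau (A : Set α) : Set (Set α) := {O : Set α | O ⊆ A} ∪ {Set.univ}

lemma isTopOn_tau (A : Set α) : IsTopOn (tau A) := by
  refine ⟨Or.inl (empty_subset _), Or.inr rfl, ?_, ?_⟩
  · intro 𝒮 h𝒮
    by_cases hu : Set.univ ∈ 𝒮
    · exact Or.inr (by simpa using eq_univ_of_univ_subset (subset_sUnion_of_mem hu))
    · refine Or.inl (sUnion_subset fun O hO => ?_)
      rcases h𝒮 hO with h | h
      · exact h
      · exact absurd (mem_singleton_iff.mp h ▸ hO) hu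
  · rintro U (hU | hU) V (hV | hV)
    · exact Or.inl (subset_trans inter_subset_left hU)
    · exact Or.inl (subset_trans inter_subset_left hU)
    · exact Or.inl (subset_trans inter_subset_right hV)
    · simp only [mem_singleton_iff] at hU hV
      exact Or.inr (by rw [hU, hV, univ_inter]; rfl)

lemma fStar_tau (f : α ≃ α) (A : Set α) : fStar f (tau A) = tau (f '' A) := by
  ext U
  constructor
  · rintro ⟨O, hO | hO, rfl⟩
    · exact Or.inl (image_mono hO)
    · exact Or.inr (by simp [mem_singleton_iff.mp hO, Set.image_univ, f.surjective.range_eq])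
  · rintro (hU | hU)
    · refine ⟨f.symm '' U, Or.inl ?_, by rw [Set.image_image]; simp⟩
      rintro _ ⟨u, hu, rfl⟩
      obtain ⟨a, ha, rfl⟩ := hU hu
      simpa using ha
    · exact ⟨Set.univ, Or.inr rfl, by simp [mem_singleton_iff.mp hU, Set.image_univ, f.surjective.range_eq]⟩

lemma tau_ne_univ {A : Set α} (hA : Aᶜ.Nonempty) : A ≠ Set.univ := by
  intro h; rcases hA with ⟨x, hx⟩; exact hx (h ▸ mem_univ x)

lemma sUnion_tau {A : Set α} (hA : Aᶜ.Nonempty) : ⋃₀ (tau A \ {Set.univ}) = A := by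
  apply subset_antisymm
  · refine sUnion_subset fun O hO => ?_
    rcases hO.1 with h | h
    · exact h
    · exact absurd (mem_singleton_iff.mp h) hO.2
  · exact subset_sUnion_of_mem ⟨Or.inl (fun _ h => h), tau_ne_univ hA⟩

lemma exists_equiv {S A : Set α} (h1 : #↥S = #↥A) (h2 : #↥Sᶜ = #↥Aᶜ) :
    ∃ f : α ≃ α, f '' S = A := by
  classical
  obtain ⟨e₁⟩ := Cardinal.eq.mp h1
  obtain ⟨e₂⟩ := Cardinal.eq.mp h2
  refine ⟨(Equiv.Set.sumCompl S).symm.trans ((e₁.sumCongr e₂).trans (Equiv.Set.sumCompl A)), ?_⟩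
  set f := (Equiv.Set.sumCompl S).symm.trans ((e₁.sumCongr e₂).trans (Equiv.Set.sumCompl A)) with hf
  have hfS : ∀ x ∈ S, f x ∈ A := by
    intro x hx
    simp only [hf, Equiv.trans_apply, Equiv.Set.sumCompl_symm_apply_of_mem hx, Equiv.sumCongr_apply,
      Sum.map_inl, Equiv.Set.sumCompl_apply_inl]
    exact (e₁ ⟨x, hx⟩).2
  have hfSc : ∀ x ∉ S, f x ∈ Aᶜ := by
    intro x hx
    simp only [hf, Equiv.trans_apply, Equiv.Set.sumCompl_symm_apply_of_notMem hx, Equiv.sumCongr_apply,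
      Sum.map_inr, Equiv.Set.sumCompl_apply_inr]
    exact (e₂ ⟨x, hx⟩).2
  apply subset_antisymm
  · rintro _ ⟨x, hx, rfl⟩; exact hfS x hx
  · intro a ha
    obtain ⟨x, rfl⟩ := f.surjective a
    by_cases hx : x ∈ S
    · exact ⟨x, hx, rfl⟩
    · exact absurd ha (hfSc x hx)

lemma compl_nonempty {A : Set α} (h : #↥Aᶜ ≠ 0) : Aᶜ.Nonempty :=
  Set.nonempty_coe_sort.mp (Cardinal.mk_ne_zero_iff.mp h)

lemma char {S : Set α} {σ : Set (Set α)} (hσ : σ ∈ homClass (tau S)) :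
    ∃ A : Set α, σ = tau A ∧ #↥A = #↥S ∧ #↥Aᶜ = #↥Sᶜ := by
  obtain ⟨f, rfl⟩ := hσ
  refine ⟨f '' S, fStar_tau f S, Cardinal.mk_image_eq f.injective, ?_⟩
  rw [← Set.image_compl_eq f.bijective]
  exact Cardinal.mk_image_eq f.injective

end Stmt18Aux

theorem stmt18 {α : Type u} (l m : Cardinal.{u}) (hl : ℵ₀ ≤ l) (hm : ℵ₀ ≤ m)
    (hκ : l + m = #α) (S : Set α) (hS : #↥S = l) (hSc : #↥Sᶜ = m) :
    IsTopOn ({O : Set α | O ⊆ S} ∪ {Set.univ}) ∧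
    ∃ Φ : ↥(homClass ({O : Set α | O ⊆ S} ∪ {Set.univ})) ≃o
          ↥{A : Set α | #↥A = l ∧ #↥Aᶜ = m},
      ∀ (f : α ≃ α)
        (hf : fStar f ({O : Set α | O ⊆ S} ∪ {Set.univ}) ∈
              homClass ({O : Set α | O ⊆ S} ∪ {Set.univ})),
        (Φ ⟨fStar f ({O : Set α | O ⊆ S} ∪ {Set.univ}), hf⟩ : Set α) = f '' S := by
  classical
  open Stmt18Aux in
  have hm0 : m ≠ 0 := (Cardinal.aleph0_pos.trans_le hm).ne'
  have hTS : ({O : Set α | O ⊆ S} ∪ {Set.univ}) = Stmt18Aux.tau S := rfl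
  -- compl nonempty for any A in the target set
  have key : ∀ σ : ↥(homClass (Stmt18Aux.tau S)),
      ∃ A : Set α, (σ : Set (Set α)) = Stmt18Aux.tau A ∧ #↥A = l ∧ #↥Aᶜ = m ∧
        ⋃₀ ((σ : Set (Set α)) \ {Set.univ}) = A := by
    intro σ
    obtain ⟨A, h1, h2, h3⟩ := Stmt18Aux.char σ.2
    have hne : Aᶜ.Nonempty := Stmt18Aux.compl_nonempty (by rw [h3, hSc]; exact hm0)
    exact ⟨A, h1, h2.trans hS, h3.trans hSc, by rw [h1, Stmt18Aux.sUnion_tau hne]⟩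
  rw [hTS]
  refine ⟨Stmt18Aux.isTopOn_tau S, ?_⟩
  have gmem : ∀ σ : ↥(homClass (Stmt18Aux.tau S)),
      ⋃₀ ((σ : Set (Set α)) \ {Set.univ}) ∈ {A : Set α | #↥A = l ∧ #↥Aᶜ = m} := by
    intro σ
    obtain ⟨A, _, h2, h3, h4⟩ := key σ
    exact h4 ▸ ⟨h2, h3⟩
  have hmem : ∀ A : ↥{A : Set α | #↥A = l ∧ #↥Aᶜ = m},
      Stmt18Aux.tau (A : Set α) ∈ homClass (Stmt18Aux.tau S) := by
    intro A
    obtain ⟨f, hf⟩ := Stmt18Aux.exists_equiv (hS.trans A.2.1.symm) (hSc.trans A.2.2.symm)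
    exact ⟨f, by rw [Stmt18Aux.fStar_tau, hf]⟩
  refine ⟨⟨⟨fun σ => ⟨_, gmem σ⟩, fun A => ⟨_, hmem A⟩, ?_, ?_⟩, ?_⟩, ?_⟩
  · intro σ
    obtain ⟨A, h1, h2, h3, h4⟩ := key σ
    refine Subtype.ext ?_
    show Stmt18Aux.tau (⋃₀ ((σ : Set (Set α)) \ {Set.univ})) = (σ : Set (Set α))
    rw [h4, ← h1]
  · intro A
    have hne : (A : Set α)ᶜ.Nonempty := Stmt18Aux.compl_nonempty (by rw [A.2.2]; exact hm0)
    exact Subtype.ext (Stmt18Aux.sUnion_tau hne)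
  · intro σ₁ σ₂
    obtain ⟨A₁, h11, h12, h13, h14⟩ := key σ₁
    obtain ⟨A₂, h21, h22, h23, h24⟩ := key σ₂
    simp only [Equiv.coe_fn_mk, Subtype.mk_le_mk]
    rw [h14, h24, ← Subtype.coe_le_coe, h11, h21]
    constructor
    · rintro h O (hO | hO)
      · exact Or.inl (hO.trans h)
      · exact Or.inr hO
    · intro h
      have hA₁ : A₁ ∈ Stmt18Aux.tau A₂ := h (Or.inl fun _ hx => hx)
      rcases hA₁ with hA₁ | hA₁
      · exact hA₁
      · exact absurd (mem_singleton_iff.mp hA₁)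
          (Stmt18Aux.tau_ne_univ (Stmt18Aux.compl_nonempty (by rw [h13]; exact hm0)))
  · intro f hf
    have hne : ((f '' S)ᶜ).Nonempty := by
      rw [← Set.image_compl_eq f.bijective]
      exact (Stmt18Aux.compl_nonempty (hSc ▸ hm0)).image f
    show ⋃₀ (fStar f (Stmt18Aux.tau S) \ {Set.univ}) = f '' S
    rw [Stmt18Aux.fStar_tau, Stmt18Aux.sUnion_tau hne]
end
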